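/- Let D=(V,A) be a finite digraph and let B_1 and B_2 be branchings in D partitioning A. Let R'_1, R'_2 ⊆ V be vertex sets such that R'_1 ∪ R'_2 = R(B_1) ∪ R(B_2) and R'_1 ∩ R'_2 = R(B_1) ∩ R(B_2). Then A can be partitioned into two branchings B'_1 and B'_2 with R(B'_1) = R'_1 and R(B'_2) = R'_2 if and only if |R'_1 ∩ X| ≥ 1 and |R'_2 ∩ X| ≥ 1 for each source component X of D. -/

import Mathlib

/-!
A branching `B ⊆ A` has a root in every source component `X`: a vertex of `X` entered by no arc of
`B` from inside `X` is a root, as no arc enters `X` from outside.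

Conversely, Edmonds' theorem gives disjoint branchings with root sets `R i` as soon as every
nonempty `X` is entered by at least as many arcs as there are `R i` missing `X`. Its proof moves
an arc from `R i` to `V \ R i` into the `i`-th branching while keeping this cut condition; such an
arc is found inside a minimal tight set, by uncrossing (arc counts are submodular, the number of
missing root sets is supermodular). The cut condition holds for `R₁'`, `R₂'`: a set missed by one
of them is entered by some arc, else it would contain a source component, and a set missed by both
contains no root of `B₁` or `B₂`, so it is entered by an arc of each. Counting roots shows that the
two new branchings exhaust `A`.
-/

open Finset
open scoped Classical Pointwise

variable {V : Type*}

/-- The indegree `d⁻_B(v)` of the vertex `v` with respect to the arc set `B`,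
i.e. the number of arcs in `B` whose head is `v`. -/
noncomputable def inDeg (B : Finset (V × V)) (v : V) : ℕ :=
  (B.filter (fun a => a.2 = v)).card

/-- `B` is a branching of the digraph `D = (V, A)`: `B ⊆ A`, every vertex has
indegree at most `1` in `B`, and the underlying undirected edge set of `B` is a
forest (equivalently, every nonempty `X ⊆ V` induces at most `|X| - 1` arcs of `B`). -/
def IsBranching (A B : Finset (V × V)) : Prop :=
  B ⊆ A ∧ (∀ v : V, inDeg B v ≤ 1) ∧
    ∀ X : Finset V, X.Nonempty →
      (B.filter (fun a => a.1 ∈ X ∧ a.2 ∈ X)).card ≤ X.card - 1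

/-- `B` is a `b`-branching of the digraph `D = (V, A)`:
`B ⊆ A`, `d⁻_B(v) ≤ b(v)` for every vertex `v`, and
`|B[X]| ≤ b(X) - 1` for every nonempty `X ⊆ V`. -/
def IsBBranching (A : Finset (V × V)) (b : V → ℕ) (B : Finset (V × V)) : Prop :=
  B ⊆ A ∧ (∀ v : V, inDeg B v ≤ b v) ∧
    ∀ X : Finset V, X.Nonempty →
      (B.filter (fun a => a.1 ∈ X ∧ a.2 ∈ X)).card ≤ (∑ v ∈ X, b v) - 1

/-- Reachability along the arcs of `A`. -/
def Reaches (A : Finset (V × V)) : V → V → Prop :=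
  Relation.ReflTransGen (fun u v => (u, v) ∈ A)

/-- `X` is a source component of the digraph `D = (V, A)`: `X` is a strongly
connected component (the set of vertices mutually reachable with some vertex `v`)
and no arc of `A` enters `X` from outside. -/
def IsSourceComponent (A : Finset (V × V)) (X : Finset V) : Prop :=
  (∃ v : V, ∀ u : V, u ∈ X ↔ Reaches A u v ∧ Reaches A v u) ∧
    ∀ a ∈ A, a.2 ∈ X → a.1 ∈ X

/-- `∂B`: the set of heads of arcs of `B`. -/
noncomputable def heads (B : Finset (V × V)) : Finset V := B.image Prod.snd

/-- `R(B) = V \ ∂B`: the set of root vertices of a branching `B`. -/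
noncomputable def roots [Fintype V] (B : Finset (V × V)) : Finset V :=
  univ \ heads B

/-- The incidence vector in `ℝ^A` of an arc subset `B ⊆ A`. -/
noncomputable def incVec (A : Finset (V × V)) (B : Finset (V × V)) :
    {a : V × V // a ∈ A} → ℝ :=
  fun a => if a.1 ∈ B then 1 else 0

section Branching

variable {A B : Finset (V × V)} {X : Finset V}

lemma mem_heads {v : V} : v ∈ heads B ↔ ∃ a ∈ B, a.2 = v := by
  simp [heads]

lemma mem_roots [Fintype V] {v : V} : v ∈ roots B ↔ v ∉ heads B := by
  simp [roots]

lemma roots_insert [Fintype V] (a : V × V) : roots (insert a B) = (roots B).erase a.2 := by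
  rw [roots, roots, heads, image_insert, sdiff_insert, heads]

lemma inDeg_le_one_iff_injOn :
    (∀ v, inDeg B v ≤ 1) ↔ Set.InjOn Prod.snd (B : Set (V × V)) := by
  simp only [inDeg, card_le_one, mem_filter, Set.InjOn, mem_coe]
  exact ⟨fun h a ha b hb hab => h b.2 a ⟨ha, hab⟩ b ⟨hb, rfl⟩,
    fun h v a ha b hb => h ha.1 hb.1 (ha.2.trans hb.2.symm)⟩

lemma exists_forall_notMem_of_card_le (hX : X.Nonempty)
    (h : #(B.filter (fun a => a.1 ∈ X ∧ a.2 ∈ X)) ≤ #X - 1) :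
    ∃ x ∈ X, ∀ w ∈ X, (w, x) ∉ B := by
  by_contra! hpred
  choose! p hpX hpB using hpred
  have : #X ≤ #(B.filter (fun a => a.1 ∈ X ∧ a.2 ∈ X)) :=
    card_le_card_of_injOn (fun x => (p x, x))
      (fun x hx => mem_filter.2 ⟨hpB x hx, hpX x hx, hx⟩)
      (fun x _ y _ hxy => (Prod.mk.inj hxy).2)
  have := hX.card_pos
  omega

lemma card_le_of_forall_notMem (hinj : Set.InjOn Prod.snd (B : Set (V × V)))
    {x : V} (hx : x ∈ X) (h : ∀ w ∈ X, (w, x) ∉ B) :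
    #(B.filter (fun a => a.1 ∈ X ∧ a.2 ∈ X)) ≤ #X - 1 := by
  have hsub : (B.filter (fun a => a.1 ∈ X ∧ a.2 ∈ X)).image Prod.snd ⊆ X.erase x := by
    simp only [subset_iff, mem_image, mem_filter, mem_erase]
    rintro _ ⟨⟨w, y⟩, ⟨hB, hw, hy⟩, rfl⟩
    exact ⟨fun hyx => h w hw (hyx ▸ hB), hy⟩
  rw [← card_erase_of_mem hx, ← card_image_of_injOn (hinj.mono (filter_subset _ _))]
  exact card_le_card hsub

lemma isBranching_iff : IsBranching A B ↔ B ⊆ A ∧ Set.InjOn Prod.snd (B : Set (V × V)) ∧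
    ∀ X : Finset V, X.Nonempty → ∃ x ∈ X, ∀ w ∈ X, (w, x) ∉ B := by
  rw [IsBranching, inDeg_le_one_iff_injOn]
  refine and_congr_right fun _ => and_congr_right fun hinj => forall₂_congr fun X hX => ?_
  exact ⟨exists_forall_notMem_of_card_le hX,
    fun ⟨x, hx, h⟩ => card_le_of_forall_notMem hinj hx h⟩

lemma isBranching_empty : IsBranching A ∅ :=
  isBranching_iff.2 ⟨empty_subset _, by simp, fun _ ⟨x, hx⟩ => ⟨x, hx, by simp⟩⟩

lemma IsBranching.mono {A' : Finset (V × V)} (hB : IsBranching A B) (hA : A ⊆ A') :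
    IsBranching A' B :=
  ⟨hB.1.trans hA, hB.2⟩

lemma IsBranching.insert {a : V × V} (hB : IsBranching A B) (ha : a ∈ A)
    (h₁ : a.1 ∉ heads B) (h₂ : a.2 ∉ heads B) (hne : a.1 ≠ a.2) :
    IsBranching A (insert a B) := by
  obtain ⟨hBA, hinj, hforest⟩ := isBranching_iff.1 hB
  have haB : a ∉ B := fun h => h₂ (mem_heads.2 ⟨a, h, rfl⟩)
  refine isBranching_iff.2 ⟨insert_subset ha hBA, ?_, fun X hX => ?_⟩
  · rw [coe_insert, Set.injOn_insert haB]
    exact ⟨hinj, fun ⟨b, hb, hba⟩ => h₂ (mem_heads.2 ⟨b, hb, hba⟩)⟩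
  by_cases hX₁ : a.1 ∈ X
  · refine ⟨a.1, hX₁, fun w _ hw => ?_⟩
    rcases mem_insert.1 hw with hwa | hw
    · exact hne (congrArg Prod.snd hwa)
    · exact h₁ (mem_heads.2 ⟨_, hw, rfl⟩)
  · obtain ⟨x, hx, h⟩ := hforest X hX
    refine ⟨x, hx, fun w hw hwx => ?_⟩
    rcases mem_insert.1 hwx with rfl | hwx
    · exact hX₁ hw
    · exact h w hw hwx

lemma IsBranching.card_add_card_roots [Fintype V] (hB : IsBranching A B) :
    #B + #(roots B) = Fintype.card V := by
  rw [roots, ← compl_eq_univ_sdiff, heads, ← card_add_card_compl (B.image Prod.snd),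
    card_image_of_injOn (isBranching_iff.1 hB).2.1]

end Branching

noncomputable def entering (A : Finset (V × V)) (X : Finset V) : Finset (V × V) :=
  A.filter (fun a => a.2 ∈ X ∧ a.1 ∉ X)

section Entering

variable {A B : Finset (V × V)} {X : Finset V}

lemma mem_entering {a : V × V} : a ∈ entering A X ↔ a ∈ A ∧ a.2 ∈ X ∧ a.1 ∉ X :=
  mem_filter

lemma entering_mono (h : B ⊆ A) : entering B X ⊆ entering A X :=
  filter_subset_filter _ h

lemma entering_erase (a : V × V) : entering (A.erase a) X = (entering A X).erase a :=
  filter_erase _ _ _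

lemma entering_univ [Fintype V] : entering A univ = ∅ := by
  simp [entering]

lemma card_entering_union_add_card_entering_inter_le (A : Finset (V × V)) (X Y : Finset V) :
    #(entering A (X ∪ Y)) + #(entering A (X ∩ Y)) ≤ #(entering A X) + #(entering A Y) := by
  simp only [entering, card_filter, ← sum_add_distrib]
  refine sum_le_sum fun a _ => ?_
  simp only [mem_union, mem_inter]
  split_ifs <;> simp_all

lemma IsBranching.entering_nonempty [Fintype V] (hB : IsBranching A B) (hX : X.Nonempty)
    (hroots : Disjoint (roots B) X) : (entering B X).Nonempty := by
  obtain ⟨x, hx, hunentered⟩ := (isBranching_iff.1 hB).2.2 X hX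
  have hxhead : x ∈ heads B := mem_roots.not_left.1 (disjoint_right.1 hroots hx)
  obtain ⟨⟨w, x⟩, hwx, rfl⟩ := mem_heads.1 hxhead
  exact ⟨(w, x), mem_entering.2 ⟨hwx, hx, fun hw => hunentered w hw hwx⟩⟩

lemma two_le_card_entering [Fintype V] {B₁ B₂ : Finset (V × V)} (h₁ : IsBranching A B₁)
    (h₂ : IsBranching A B₂) (hd : Disjoint B₁ B₂) (hX : X.Nonempty)
    (hroots : Disjoint (roots B₁ ∪ roots B₂) X) : 2 ≤ #(entering A X) := by
  rw [disjoint_union_left] at hroots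
  calc 2 = 1 + 1 := rfl
    _ ≤ #(entering B₁ X) + #(entering B₂ X) :=
        add_le_add (h₁.entering_nonempty hX hroots.1).card_pos
          (h₂.entering_nonempty hX hroots.2).card_pos
    _ = #(entering B₁ X ∪ entering B₂ X) :=
        (card_union_of_disjoint (hd.mono (filter_subset _ _) (filter_subset _ _))).symm
    _ ≤ #(entering A X) :=
        card_le_card (union_subset (entering_mono h₁.1) (entering_mono h₂.1))

end Entering

section SourceComponent

variable {A B : Finset (V × V)} {X : Finset V}

lemma IsSourceComponent.nonempty (hX : IsSourceComponent A X) : X.Nonempty := by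
  obtain ⟨v, hv⟩ := hX.1
  exact ⟨v, (hv v).2 ⟨.refl, .refl⟩⟩

lemma IsBranching.not_disjoint_roots [Fintype V] (hB : IsBranching A B)
    (hX : IsSourceComponent A X) : ¬Disjoint (roots B) X := fun hroots =>
  have ⟨_, hb⟩ := hB.entering_nonempty hX.nonempty hroots
  have ⟨hbB, hb₂, hb₁⟩ := mem_entering.1 hb
  hb₁ (hX.2 _ (hB.1 hbB) hb₂)

/-- The strongly connected component of a vertex of `X` with the fewest ancestors is a source
component: an arc entering it would come from a vertex with strictly fewer ancestors. -/
lemma exists_isSourceComponent_subset [Fintype V] (hX : X.Nonempty)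
    (hclosed : entering A X = ∅) : ∃ Y, IsSourceComponent A Y ∧ Y ⊆ X := by
  have hanc : ∀ x ∈ X, ∀ u, Reaches A u x → u ∈ X := fun x hx u hux => by
    induction hux using Relation.ReflTransGen.head_induction_on with
    | refl => exact hx
    | head huv _ ih =>
      by_contra hu
      exact (eq_empty_iff_forall_notMem.1 hclosed) _ (mem_entering.2 ⟨huv, ih, hu⟩)
  obtain ⟨x, hx, hmin⟩ :=
    X.exists_min_image (fun x => #({u | Reaches A u x} : Finset V)) hX
  refine ⟨({u | Reaches A u x ∧ Reaches A x u} : Finset V),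
    ⟨⟨x, by simp⟩, fun a ha ha₂ => ?_⟩, fun u hu => hanc x hx u (mem_filter.1 hu).2.1⟩
  have ha₁x : Reaches A a.1 x := .head ha (mem_filter.1 ha₂).2.1
  refine mem_filter.2 ⟨mem_univ _, ha₁x, ?_⟩
  by_contra hxa₁
  have hlt : #({u | Reaches A u a.1} : Finset V) < #({u | Reaches A u x} : Finset V) := by
    refine card_lt_card ⟨fun u hu => ?_, fun hsub => hxa₁ ?_⟩
    · simp only [mem_filter, mem_univ, true_and] at hu ⊢
      exact hu.trans ha₁x
    · simpa using hsub (mem_filter.2 ⟨mem_univ _, .refl⟩)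
  exact (hmin a.1 (hanc x hx a.1 ha₁x)).not_gt hlt

lemma entering_nonempty_of_disjoint [Fintype V] {S : Finset V}
    (hsrc : ∀ Y, IsSourceComponent A Y → ¬Disjoint S Y) (hX : X.Nonempty)
    (hSX : Disjoint S X) : (entering A X).Nonempty := by
  rw [nonempty_iff_ne_empty]
  intro hclosed
  obtain ⟨Y, hY, hYX⟩ := exists_isSourceComponent_subset hX hclosed
  exact hsrc Y hY (hSX.mono_right hYX)

end SourceComponent

section Edmonds

variable {ι : Type*} [Fintype ι]

/-- In disjoint branchings with root sets `R i`, each `i` with `R i` missing `X` needs its own arc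
entering `X`. -/
noncomputable def missingRoots (R : ι → Finset V) (X : Finset V) : Finset ι :=
  {i | Disjoint (R i) X}

def CutCondition (A : Finset (V × V)) (R : ι → Finset V) : Prop :=
  ∀ X : Finset V, X.Nonempty → #(missingRoots R X) ≤ #(entering A X)

variable {A : Finset (V × V)} {R R' : ι → Finset V} {X X' : Finset V} {i : ι}

lemma mem_missingRoots : i ∈ missingRoots R X ↔ Disjoint (R i) X := by
  simp [missingRoots]

lemma missingRoots_anti (hR : R ≤ R') (hX : X ⊆ X') : missingRoots R' X' ⊆ missingRoots R X :=
  fun j hj => mem_missingRoots.2 ((mem_missingRoots.1 hj).mono (hR j) hX)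

lemma card_missingRoots_lt (hR : R ≤ R') (hX : X ⊆ X') (hi : Disjoint (R i) X)
    (hi' : ¬Disjoint (R' i) X') : #(missingRoots R' X') < #(missingRoots R X) :=
  card_lt_card <| (ssubset_iff_of_subset (missingRoots_anti hR hX)).2
    ⟨i, mem_missingRoots.2 hi, mt mem_missingRoots.1 hi'⟩

lemma missingRoots_union (R : ι → Finset V) (X Y : Finset V) :
    missingRoots R (X ∪ Y) = missingRoots R X ∩ missingRoots R Y := by
  ext j
  simp only [mem_inter, mem_missingRoots, disjoint_union_right]

lemma missingRoots_union_subset_inter (R : ι → Finset V) (X Y : Finset V) :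
    missingRoots R X ∪ missingRoots R Y ⊆ missingRoots R (X ∩ Y) :=
  union_subset (missingRoots_anti le_rfl inter_subset_left)
    (missingRoots_anti le_rfl inter_subset_right)

lemma card_missingRoots_add_card_missingRoots (R : ι → Finset V) (X Y : Finset V) :
    #(missingRoots R X) + #(missingRoots R Y) =
      #(missingRoots R X ∪ missingRoots R Y) + #(missingRoots R (X ∪ Y)) := by
  rw [missingRoots_union, card_union_add_card_inter]

lemma card_missingRoots_add_card_missingRoots_le (R : ι → Finset V) (X Y : Finset V) :
    #(missingRoots R X) + #(missingRoots R Y) ≤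
      #(missingRoots R (X ∩ Y)) + #(missingRoots R (X ∪ Y)) := by
  rw [card_missingRoots_add_card_missingRoots]
  exact Nat.add_le_add_right (card_le_card (missingRoots_union_subset_inter R X Y)) _

lemma card_missingRoots_add_card_missingRoots_lt {Y : Finset V} (hX : ¬Disjoint (R i) X)
    (hY : ¬Disjoint (R i) Y) (hXY : Disjoint (R i) (X ∩ Y)) :
    #(missingRoots R X) + #(missingRoots R Y) <
      #(missingRoots R (X ∩ Y)) + #(missingRoots R (X ∪ Y)) := by
  rw [card_missingRoots_add_card_missingRoots]
  refine Nat.add_lt_add_right (card_lt_card ?_) _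
  refine (ssubset_iff_of_subset (missingRoots_union_subset_inter R X Y)).2 ⟨i, ?_, ?_⟩
  · exact mem_missingRoots.2 hXY
  · simp only [mem_union, mem_missingRoots, hX, hY, or_self, not_false_eq_true]

/-- `A.erase a` with `update R i (insert a.2 (R i))` is the instance left after putting `a` into the
`i`-th branching. -/
lemma CutCondition.exists_tight_of_not_erase [DecidableEq ι] {a : V × V}
    (hcut : CutCondition A R)
    (h : ¬CutCondition (A.erase a) (Function.update R i (insert a.2 (R i)))) :
    ∃ Y, ¬Disjoint (R i) Y ∧ a ∈ entering A Y ∧ #(entering A Y) = #(missingRoots R Y) := by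
  simp only [CutCondition, not_forall, not_le] at h
  obtain ⟨X, hX, hlt⟩ := h
  have hR : R ≤ Function.update R i (insert a.2 (R i)) :=
    le_update_iff.2 ⟨subset_insert _ _, fun _ _ => le_rfl⟩
  have hle := card_le_card (missingRoots_anti hR (subset_refl X))
  have hcutX := hcut X hX
  rw [entering_erase] at hlt
  have ha : a ∈ entering A X := by
    by_contra ha
    rw [erase_eq_of_notMem ha] at hlt
    omega
  rw [card_erase_of_mem ha] at hlt
  have hpos := card_pos.2 ⟨a, ha⟩
  refine ⟨X, fun hi => ?_, ha, by omega⟩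
  have hi' : ¬Disjoint (Function.update R i (insert a.2 (R i)) i) X := by
    rw [Function.update_self, not_disjoint_iff]
    exact ⟨a.2, mem_insert_self _ _, (mem_entering.1 ha).2.1⟩
  have := card_missingRoots_lt hR (subset_refl X) hi hi'
  omega

/-- Uncrossing: a minimal tight set met by `R i` and not contained in it provides the arc. -/
lemma CutCondition.exists_arc_of_tight [DecidableEq ι] (hcut : CutCondition A R)
    (X : Finset V) (hXi : ¬Disjoint (R i) X) (hXsub : ¬X ⊆ R i)
    (htight : #(entering A X) = #(missingRoots R X)) :
    ∃ a ∈ A, a.1 ∈ R i ∧ a.2 ∉ R i ∧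
      CutCondition (A.erase a) (Function.update R i (insert a.2 (R i))) := by
  induction X using Finset.strongInduction with
  | H X ih =>
  have hXR : (X \ R i).Nonempty := by rwa [sdiff_nonempty]
  have hlt : #(entering A X) < #(entering A (X \ R i)) := by
    have := card_missingRoots_lt (le_refl R) sdiff_subset disjoint_sdiff_self_right hXi
    have := hcut _ hXR
    omega
  obtain ⟨a, ha, ha'⟩ := not_subset.1 fun hsub => (card_le_card hsub).not_gt hlt
  obtain ⟨haA, ha₂, ha₁⟩ := mem_entering.1 ha
  have ha₁X : a.1 ∈ X :=
    by_contra fun h => ha' (mem_entering.2 ⟨haA, (mem_sdiff.1 ha₂).1, h⟩)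
  have ha₁R : a.1 ∈ R i := by_contra fun h => ha₁ (mem_sdiff.2 ⟨ha₁X, h⟩)
  by_cases hgood : CutCondition (A.erase a) (Function.update R i (insert a.2 (R i)))
  · exact ⟨a, haA, ha₁R, (mem_sdiff.1 ha₂).2, hgood⟩
  obtain ⟨Y, hYi, haY, hYtight⟩ := CutCondition.exists_tight_of_not_erase hcut hgood
  have ha₂XY : a.2 ∈ X ∩ Y :=
    mem_inter.2 ⟨(mem_sdiff.1 ha₂).1, (mem_entering.1 haY).2.1⟩
  have hsub := card_entering_union_add_card_entering_inter_le A X Y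
  have hinter := hcut (X ∩ Y) ⟨_, ha₂XY⟩
  have hunion := hcut (X ∪ Y) ⟨_, mem_union_left _ (mem_inter.1 ha₂XY).1⟩
  by_cases hXYi : Disjoint (R i) (X ∩ Y)
  · have := card_missingRoots_add_card_missingRoots_lt hXi hYi hXYi
    omega
  · have := card_missingRoots_add_card_missingRoots_le R X Y
    refine ih (X ∩ Y) ⟨inter_subset_left, fun h => (mem_entering.1 haY).2.2 ?_⟩ hXYi
      (fun h => (mem_sdiff.1 ha₂).2 (h ha₂XY)) (by omega)
    exact (mem_inter.1 (h ha₁X)).2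

lemma CutCondition.exists_arc [Fintype V] [DecidableEq ι] (hcut : CutCondition A R)
    (hi : R i ≠ univ) :
    ∃ a ∈ A, a.1 ∈ R i ∧ a.2 ∉ R i ∧
      CutCondition (A.erase a) (Function.update R i (insert a.2 (R i))) := by
  obtain ⟨v, -, hv⟩ := exists_of_ssubset (ssubset_univ_iff.2 hi)
  have huniv := hcut univ ⟨v, mem_univ v⟩
  rw [entering_univ, card_empty, Nat.le_zero, card_eq_zero] at huniv
  refine CutCondition.exists_arc_of_tight hcut univ (fun hdisj => ?_)
    (fun h => hi (univ_subset_iff.1 h)) ?_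
  · exact notMem_empty i (huniv ▸ mem_missingRoots.2 hdisj)
  · rw [entering_univ, huniv, card_empty, card_empty]

/-- **Edmonds' disjoint branchings theorem.** -/
theorem CutCondition.exists_disjoint_branchings [Fintype V] (hcut : CutCondition A R) :
    ∃ B : ι → Finset (V × V), Pairwise (fun j k => Disjoint (B j) (B k)) ∧
      ∀ i, IsBranching A (B i) ∧ roots (B i) = R i := by
  induction A using Finset.strongInduction generalizing R with
  | H A ih =>
  by_cases hall : ∀ i, R i = univ
  · refine ⟨fun _ => ∅, fun _ _ _ => disjoint_empty_left _,
      fun i => ⟨isBranching_empty, by simp [roots, heads, hall i]⟩⟩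
  obtain ⟨i, hi⟩ := not_forall.1 hall
  obtain ⟨a, haA, ha₁, ha₂, hcut'⟩ := CutCondition.exists_arc hcut hi
  obtain ⟨B, hdisj, hB⟩ := ih (A.erase a) (erase_ssubset haA) hcut'
  have haB : ∀ j, a ∉ B j := fun j h => notMem_erase a A ((hB j).1.1 h)
  refine ⟨Function.update B i (insert a (B i)), fun j k hjk => ?_, fun j => ?_⟩
  · rcases eq_or_ne j i with rfl | hj
    · rw [Function.update_self, Function.update_of_ne hjk.symm]
      exact disjoint_insert_left.2 ⟨haB k, hdisj hjk⟩
    rcases eq_or_ne k i with rfl | hk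
    · rw [Function.update_self, Function.update_of_ne hj]
      exact disjoint_insert_right.2 ⟨haB j, hdisj hjk⟩
    · rw [Function.update_of_ne hj, Function.update_of_ne hk]
      exact hdisj hjk
  obtain ⟨hBj, hroots⟩ := hB j
  rcases eq_or_ne j i with rfl | hj
  · rw [Function.update_self] at hroots ⊢
    refine ⟨(hBj.mono (erase_subset _ _)).insert haA ?_ ?_ (fun h => ha₂ (h ▸ ha₁)), ?_⟩
    · exact mem_roots.1 (hroots ▸ mem_insert_of_mem ha₁)
    · exact mem_roots.1 (hroots ▸ mem_insert_self _ _)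
    · rw [roots_insert, hroots, erase_insert ha₂]
  · rw [Function.update_of_ne hj] at hroots ⊢
    exact ⟨hBj.mono (erase_subset _ _), hroots⟩

end Edmonds

lemma card_missingRoots_pair (R₁ R₂ X : Finset V) :
    #(missingRoots ![R₁, R₂] X) =
      (if Disjoint R₁ X then 1 else 0) + (if Disjoint R₂ X then 1 else 0) := by
  rw [missingRoots, card_filter, Fin.sum_univ_two]
  split_ifs <;> simp_all

lemma cutCondition_pair [Fintype V] {A B₁ B₂ : Finset (V × V)} {R₁ R₂ : Finset V}
    (h₁ : IsBranching A B₁) (h₂ : IsBranching A B₂) (hd : Disjoint B₁ B₂)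
    (hcup : R₁ ∪ R₂ = roots B₁ ∪ roots B₂)
    (hsrc : ∀ Y, IsSourceComponent A Y → ¬Disjoint R₁ Y ∧ ¬Disjoint R₂ Y) :
    CutCondition A ![R₁, R₂] := by
  intro X hX
  have hent₁ := entering_nonempty_of_disjoint (fun Y hY => (hsrc Y hY).1) hX
  have hent₂ := entering_nonempty_of_disjoint (fun Y hY => (hsrc Y hY).2) hX
  rw [card_missingRoots_pair]
  split_ifs with hd₁ hd₂ hd₂
  · exact two_le_card_entering h₁ h₂ hd hX (hcup ▸ disjoint_union_left.2 ⟨hd₁, hd₂⟩)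
  · exact (hent₁ hd₁).card_pos
  · exact (hent₂ hd₂).card_pos
  · exact Nat.zero_le _

lemma union_eq_of_card_roots_add_card_roots [Fintype V] {A B₁ B₂ B₁' B₂' : Finset (V × V)}
    (h₁ : IsBranching A B₁) (h₂ : IsBranching A B₂) (hd : Disjoint B₁ B₂)
    (hu : B₁ ∪ B₂ = A) (h₁' : IsBranching A B₁') (h₂' : IsBranching A B₂')
    (hd' : Disjoint B₁' B₂')
    (hcard : #(roots B₁') + #(roots B₂') = #(roots B₁) + #(roots B₂)) :
    B₁' ∪ B₂' = A := by
  refine eq_of_subset_of_card_le (union_subset h₁'.1 h₂'.1) ?_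
  rw [card_union_of_disjoint hd', ← hu, card_union_of_disjoint hd]
  have := h₁.card_add_card_roots
  have := h₂.card_add_card_roots
  have := h₁'.card_add_card_roots
  have := h₂'.card_add_card_roots
  omega

/-- Schrijver. Let `B₁, B₂` be branchings partitioning `A`,
and let `R₁', R₂'` satisfy `R₁' ∪ R₂' = R(B₁) ∪ R(B₂)` and
`R₁' ∩ R₂' = R(B₁) ∩ R(B₂)`. Then `A` can be partitioned into branchings with
root sets `R₁'` and `R₂'` iff every source component meets both `R₁'` and `R₂'`. -/
theorem branching_partition_prescribed_roots
    {V : Type*} [Fintype V] (A B₁ B₂ : Finset (V × V))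
    (h₁ : IsBranching A B₁) (h₂ : IsBranching A B₂)
    (hd : Disjoint B₁ B₂) (hu : B₁ ∪ B₂ = A)
    (R₁' R₂' : Finset V)
    (hcup : R₁' ∪ R₂' = roots B₁ ∪ roots B₂)
    (hcap : R₁' ∩ R₂' = roots B₁ ∩ roots B₂) :
    (∃ B₁' B₂' : Finset (V × V),
      IsBranching A B₁' ∧ IsBranching A B₂' ∧ Disjoint B₁' B₂' ∧ B₁' ∪ B₂' = A ∧
      roots B₁' = R₁' ∧ roots B₂' = R₂') ↔
    ∀ X : Finset V, IsSourceComponent A X →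
      1 ≤ (R₁' ∩ X).card ∧ 1 ≤ (R₂' ∩ X).card := by
  simp only [one_le_card, ← not_disjoint_iff_nonempty_inter]
  constructor
  · rintro ⟨B₁', B₂', hb₁, hb₂, -, -, rfl, rfl⟩ X hX
    exact ⟨hb₁.not_disjoint_roots hX, hb₂.not_disjoint_roots hX⟩
  · intro hsrc
    obtain ⟨B, hdisj, hB⟩ :=
      CutCondition.exists_disjoint_branchings (cutCondition_pair h₁ h₂ hd hcup hsrc)
    obtain ⟨hb₁, hr₁⟩ := hB 0
    obtain ⟨hb₂, hr₂⟩ := hB 1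
    have hd' : Disjoint (B 0) (B 1) := hdisj Fin.zero_ne_one
    refine ⟨B 0, B 1, hb₁, hb₂, hd', ?_, hr₁, hr₂⟩
    refine union_eq_of_card_roots_add_card_roots h₁ h₂ hd hu hb₁ hb₂ hd' ?_
    rw [hr₁, hr₂]
    simp only [Matrix.cons_val_zero, Matrix.cons_val_one]
    rw [← card_union_add_card_inter, hcup, hcap, card_union_add_card_inter]
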